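/- arXiv:2507.22867 — 4 statements merged into one kernel-verified Lean document; each statement's English description precedes it below -/
import Mathlib

section
/- Let z = (z_1, ..., z_d) be a vector of positive reals with ℓ¹-norm ‖z‖₁ > C·d², where C > 0. Define g(z) = ∑_{i=1}^d z_i, and for each i define z^i to be the vector with i-th coordinate C and j-th coordinate z_j + C for j ≠ i. Then ∑_{i=1}^d (z_i/g(z))·g(z^i) ≤ g(z). -/
/-- Foster–Lyapunov drift inequality: for a vector `z` of positive reals with
`‖z‖₁ > C·d²`, `g(z) = ∑ z_i` and `z^i` the vector with `i`-th entry `C` and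
`j`-th entry `z_j + C` for `j ≠ i`, we have `∑_i (z_i/g(z))·g(z^i) ≤ g(z)`. -/
theorem stmt_2 (d : ℕ) (C : ℝ) (hC : 0 < C) (z : Fin d → ℝ) (hz : ∀ i, 0 < z i)
    (hnorm : C * (d : ℝ) ^ 2 < ∑ i, z i) :
    ∑ i, (z i / ∑ j, z j) * (∑ j, if j = i then C else z j + C) ≤ ∑ i, z i := by
  set S := ∑ i, z i with hSdef
  have hS : 0 < S := lt_of_le_of_lt (by positivity) hnorm
  have hd : 0 < (d : ℝ) := by
    rcases Nat.eq_zero_or_pos d with h | h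
    · exfalso; subst h; simp [hSdef] at hS
    · exact_mod_cast h
  have hinner : ∀ i, (∑ j, if j = i then C else z j + C) = S + C * d - z i := by
    intro i
    have : ∀ j ∈ Finset.univ, (if j = i then C else z j + C)
        = (z j + C) - (if j = i then z j else 0) := by
      intro j _; split <;> ring
    rw [Finset.sum_congr rfl this, Finset.sum_sub_distrib, Finset.sum_add_distrib,
      Finset.sum_ite_eq' Finset.univ i z]
    simp [hSdef]
    ring
  have hsq : S ^ 2 ≤ (d : ℝ) * ∑ i, (z i) ^ 2 := by
    simpa [hSdef] using sq_sum_le_card_mul_sum_sq (s := Finset.univ) (f := z)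
  have key : C * d * S ≤ ∑ i, (z i) ^ 2 := by
    have h1 : C * d * S * d < S ^ 2 := by nlinarith
    nlinarith
  calc ∑ i, (z i / S) * (∑ j, if j = i then C else z j + C)
      = (∑ i, z i * (S + C * d - z i)) / S := by
        rw [Finset.sum_div]
        exact Finset.sum_congr rfl fun i _ => by rw [hinner i]; ring
    _ ≤ S := by
        rw [div_le_iff₀ hS]
        have : ∑ i, z i * (S + C * d - z i) = S * S + C * d * S - ∑ i, (z i)^2 := by
          simp only [mul_sub, mul_add, Finset.sum_sub_distrib, Finset.sum_add_distrib,
            ← Finset.sum_mul, ← hSdef]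
          ring_nf
        nlinarith
end

section
/- Consider the discrete-time Markov chain on states E = {(C(1+k₁),...,C,...,C(1+k_d)) : k ∈ ℕ^d, C at some position i}, C > 0, d = 2, where from state z the chain moves to z^i = (z₁+C,...,C,...,z_d+C) (C at position i) with probability z_i/(z₁+...+z_d). Then starting from z₁^{(1)} = (C, 2C), the return time to z₁^{(1)} is almost surely finite. -/
open MeasureTheory

/-- Transition probability of the dominating Markov chain for `d = 2`: from state
`z = (z₁, z₂)` the chain moves to `(C, z₂ + C)` with probability `z₁/(z₁+z₂)` and to
`(z₁ + C, C)` with probability `z₂/(z₁+z₂)`. -/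
noncomputable def transVM (C : ℝ) (z z' : ℝ × ℝ) : ℝ :=
  (if z' = (C, z.2 + C) then z.1 / (z.1 + z.2) else 0) +
    (if z' = (z.1 + C, C) then z.2 / (z.1 + z.2) else 0)

/-- The return path that takes `m` steps of branch 1, one step of branch 2, `r` further
steps of branch 2, and then a final branch-1 step returning to `(C, 2C)` at time
`m + r + 2`. -/
noncomputable def pathMR (C : ℝ) (m r : ℕ) (t : ℕ) : ℝ × ℝ :=
  if t ≤ m then (C, ((t : ℝ) + 2) * C)
  else if t ≤ m + 1 + r then (((t : ℝ) - (m : ℝ) + 1) * C, C)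
  else (C, 2 * C)

/-- Tail-factor `∏_{i<M} 1/(i+3) = 2/(M+2)!`. -/
noncomputable def qfac (M : ℕ) : ℝ := ∏ i ∈ Finset.range M, ((i : ℝ) + 3)⁻¹

lemma pathMR_eq1 (C : ℝ) (m r t : ℕ) (h : t ≤ m) :
    pathMR C m r t = (C, ((t : ℝ) + 2) * C) := by
  simp [pathMR, h]

lemma pathMR_eq2 (C : ℝ) (m r t : ℕ) (h1 : m < t) (h2 : t ≤ m + 1 + r) :
    pathMR C m r t = (((t : ℝ) - (m : ℝ) + 1) * C, C) := by
  simp [pathMR, h1.not_ge, h2]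

lemma pathMR_eq3 (C : ℝ) (m r t : ℕ) (h : m + 1 + r < t) :
    pathMR C m r t = (C, 2 * C) := by
  have h1 : ¬ t ≤ m := by omega
  simp [pathMR, h1, h.not_ge]

lemma transVM_branch1 (C z1 z2 : ℝ) (h : z2 + C ≠ C) :
    transVM C (z1, z2) (C, z2 + C) = z1 / (z1 + z2) := by
  have h2 : ((C, z2 + C) : ℝ × ℝ) ≠ (z1 + C, C) := fun hc => h (congrArg Prod.snd hc)
  simp [transVM, h2]

lemma transVM_branch2 (C z1 z2 : ℝ) (h : z1 + C ≠ C) :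
    transVM C (z1, z2) (z1 + C, C) = z2 / (z1 + z2) := by
  have h2 : ((z1 + C, C) : ℝ × ℝ) ≠ (C, z2 + C) := fun hc => h (congrArg Prod.fst hc)
  simp [transVM, h2]

lemma step1 (C : ℝ) (hC : 0 < C) (m r i : ℕ) (hi : i < m) :
    transVM C (pathMR C m r i) (pathMR C m r (i + 1)) = ((i : ℝ) + 3)⁻¹ := by
  rw [pathMR_eq1 C m r i hi.le, pathMR_eq1 C m r (i + 1) hi]
  have hx : ((C, (((i + 1 : ℕ) : ℝ) + 2) * C) : ℝ × ℝ) = (C, ((i : ℝ) + 2) * C + C) := by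
    rw [Prod.mk.injEq]; refine ⟨rfl, by push_cast; ring⟩
  rw [hx, transVM_branch1 C C (((i : ℝ) + 2) * C) (by intro h; nlinarith)]
  rw [show C + ((i : ℝ) + 2) * C = ((i : ℝ) + 3) * C by ring]
  have h3 : ((i : ℝ) + 3) ≠ 0 := by positivity
  field_simp

lemma stepm (C : ℝ) (hC : 0 < C) (m r : ℕ) :
    transVM C (pathMR C m r m) (pathMR C m r (m + 1)) = ((m : ℝ) + 2) / ((m : ℝ) + 3) := by
  rw [pathMR_eq1 C m r m le_rfl, pathMR_eq2 C m r (m + 1) (by omega) (by omega)]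
  have hx : (((((m + 1 : ℕ) : ℝ)) - (m : ℝ) + 1) * C, C) = ((C + C, C) : ℝ × ℝ) := by
    rw [Prod.mk.injEq]; refine ⟨by push_cast; ring, rfl⟩
  rw [hx, transVM_branch2 C C (((m : ℝ) + 2) * C) (by intro h; nlinarith)]
  rw [show C + ((m : ℝ) + 2) * C = ((m : ℝ) + 3) * C by ring]
  have h3 : ((m : ℝ) + 3) ≠ 0 := by positivity
  have hC' : C ≠ 0 := hC.ne'
  field_simp

lemma step2 (C : ℝ) (hC : 0 < C) (m r s : ℕ) (hs : s < r) :
    transVM C (pathMR C m r (m + 1 + s)) (pathMR C m r (m + 1 + s + 1))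
      = ((s : ℝ) + 3)⁻¹ := by
  rw [pathMR_eq2 C m r (m + 1 + s) (by omega) (by omega),
      pathMR_eq2 C m r (m + 1 + s + 1) (by omega) (by omega)]
  have hx : (((((m + 1 + s + 1 : ℕ) : ℝ)) - (m : ℝ) + 1) * C, C)
      = (((((m + 1 + s : ℕ) : ℝ)) - (m : ℝ) + 1) * C + C, C) := by
    rw [Prod.mk.injEq]; refine ⟨by push_cast; ring, rfl⟩
  have hzz : ((((m + 1 + s : ℕ) : ℝ)) - (m : ℝ) + 1) * C = ((s : ℝ) + 2) * C := by
    push_cast; ring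
  rw [hx, hzz, transVM_branch2 C (((s : ℝ) + 2) * C) C (by intro h; nlinarith [s.cast_nonneg (α := ℝ)])]
  rw [show ((s : ℝ) + 2) * C + C = ((s : ℝ) + 3) * C by ring]
  have h3 : ((s : ℝ) + 3) ≠ 0 := by positivity
  have hC' : C ≠ 0 := hC.ne'
  field_simp

lemma steplast (C : ℝ) (hC : 0 < C) (m r : ℕ) :
    transVM C (pathMR C m r (m + 1 + r)) (pathMR C m r (m + 1 + r + 1))
      = ((r : ℝ) + 2) / ((r : ℝ) + 3) := by
  rw [pathMR_eq2 C m r (m + 1 + r) (by omega) (by omega), pathMR_eq3 C m r _ (by omega)]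
  have hzz : ((((m + 1 + r : ℕ) : ℝ)) - (m : ℝ) + 1) * C = ((r : ℝ) + 2) * C := by
    push_cast; ring
  have hx : ((C, 2 * C) : ℝ × ℝ) = (C, C + C) := by
    rw [Prod.mk.injEq]; exact ⟨rfl, by ring⟩
  rw [hzz, hx, transVM_branch1 C (((r : ℝ) + 2) * C) C (by intro h; nlinarith)]
  rw [show ((r : ℝ) + 2) * C + C = ((r : ℝ) + 3) * C by ring]
  have h3 : ((r : ℝ) + 3) ≠ 0 := by positivity
  have hC' : C ≠ 0 := hC.ne'
  rw [div_eq_div_iff (by positivity) h3]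
  ring

/-- The cylinder probability of the return path `pathMR C m r`. -/
lemma prod_path (C : ℝ) (hC : 0 < C) (m r : ℕ) :
    ∏ i ∈ Finset.range (m + 1 + (r + 1)), transVM C (pathMR C m r i) (pathMR C m r (i + 1))
      = (qfac m * (((m : ℝ) + 2) / ((m : ℝ) + 3)))
        * (qfac r * (((r : ℝ) + 2) / ((r : ℝ) + 3))) := by
  rw [Finset.prod_range_add, Finset.prod_range_succ, Finset.prod_range_succ]
  have e1 : ∏ i ∈ Finset.range m, transVM C (pathMR C m r i) (pathMR C m r (i + 1)) = qfac m :=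
    Finset.prod_congr rfl fun i hi => step1 C hC m r i (Finset.mem_range.mp hi)
  have e2 : ∏ i ∈ Finset.range r,
      transVM C (pathMR C m r (m + 1 + i)) (pathMR C m r (m + 1 + i + 1)) = qfac r :=
    Finset.prod_congr rfl fun i hi => step2 C hC m r i (Finset.mem_range.mp hi)
  rw [e1, e2, stepm C hC m r, steplast C hC m r]

/-- Telescoping sum: `∑_{m<M} q m (m+2)/(m+3) = 1 - q M`. -/
lemma sum_g (M : ℕ) :
    ∑ m ∈ Finset.range M, qfac m * (((m : ℝ) + 2) / ((m : ℝ) + 3)) = 1 - qfac M := by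
  induction M with
  | zero => simp [qfac]
  | succ M ih =>
    rw [Finset.sum_range_succ, ih]
    have hq : qfac (M + 1) = qfac M * ((M : ℝ) + 3)⁻¹ := by
      rw [qfac, Finset.prod_range_succ]; rfl
    rw [hq]
    have h3 : (M : ℝ) + 3 ≠ 0 := by positivity
    field_simp
    ring

lemma qfac_nonneg (M : ℕ) : 0 ≤ qfac M :=
  Finset.prod_nonneg fun i _ => by positivity

lemma qfac_le (M : ℕ) : qfac M ≤ (3 : ℝ)⁻¹ ^ M := by
  calc qfac M ≤ ∏ _i ∈ Finset.range M, (3 : ℝ)⁻¹ := by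
        refine Finset.prod_le_prod (fun i _ => by positivity) (fun i _ => ?_)
        rw [inv_le_inv₀ (by positivity) (by norm_num)]
        have : (0 : ℝ) ≤ (i : ℝ) := i.cast_nonneg
        linarith
    _ = (3 : ℝ)⁻¹ ^ M := by rw [Finset.prod_const, Finset.card_range]

lemma qfac_tendsto : Filter.Tendsto qfac Filter.atTop (nhds 0) := by
  have h1 : Filter.Tendsto (fun M : ℕ => (3 : ℝ)⁻¹ ^ M) Filter.atTop (nhds 0) :=
    tendsto_pow_atTop_nhds_zero_of_lt_one (by norm_num) (by norm_num)
  exact squeeze_zero qfac_nonneg qfac_le h1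

/-- Distinct return paths give disjoint cylinder events (ordered case). -/
lemma path_disj_aux (C : ℝ) (hC : 0 < C) (m r m' r' : ℕ)
    (h : m < m' ∨ (m = m' ∧ r < r')) (ω : ℕ → ℝ × ℝ)
    (h1 : ∀ i ≤ m + 1 + (r + 1), ω i = pathMR C m r i)
    (h2 : ∀ i ≤ m' + 1 + (r' + 1), ω i = pathMR C m' r' i) : False := by
  rcases h with h | ⟨rfl, h⟩
  · have e1 := h1 (m + 1) (by omega)
    have e2 := h2 (m + 1) (by omega)
    rw [pathMR_eq2 C m r (m + 1) (by omega) (by omega)] at e1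
    rw [pathMR_eq1 C m' r' (m + 1) (by omega)] at e2
    have := congrArg Prod.fst (e1.symm.trans e2)
    simp only at this
    push_cast at this
    nlinarith
  · have e1 := h1 (m + 1 + (r + 1)) le_rfl
    have e2 := h2 (m + 1 + (r + 1)) (by omega)
    rw [pathMR_eq3 C m r _ (by omega)] at e1
    rw [pathMR_eq2 C m r' _ (by omega) (by omega)] at e2
    have := congrArg Prod.fst (e1.symm.trans e2)
    simp only at this
    push_cast at this
    nlinarith [r.cast_nonneg (α := ℝ)]

/-- For the chain started at `z₁^{(1)} = (C, 2C)` (characterised by its cylinder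
probabilities), the return time to `(C, 2C)` is almost surely finite. -/
theorem stmt_14 (C : ℝ) (hC : 0 < C)
    (μ : Measure (ℕ → ℝ × ℝ)) [IsProbabilityMeasure μ]
    (hcyl : ∀ (n : ℕ) (x : ℕ → ℝ × ℝ),
      μ {ω | ∀ i ≤ n, ω i = x i}
        = (if x 0 = ((C, 2 * C) : ℝ × ℝ) then 1 else 0)
            * ENNReal.ofReal (∏ i ∈ Finset.range n, transVM C (x i) (x (i + 1)))) :
    μ {ω | ∃ n : ℕ, 1 ≤ n ∧ ω n = ((C, 2 * C) : ℝ × ℝ)} = 1 := by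
  set T : Set (ℕ → ℝ × ℝ) := {ω | ∃ n : ℕ, 1 ≤ n ∧ ω n = ((C, 2 * C) : ℝ × ℝ)} with hT
  set E : ℕ × ℕ → Set (ℕ → ℝ × ℝ) :=
    fun p => {ω | ∀ i ≤ p.1 + 1 + (p.2 + 1), ω i = pathMR C p.1 p.2 i} with hE
  have meas : ∀ p, MeasurableSet (E p) := by
    intro p
    have : E p = ⋂ i ∈ {i : ℕ | i ≤ p.1 + 1 + (p.2 + 1)},
        (fun ω : ℕ → ℝ × ℝ => ω i) ⁻¹' {pathMR C p.1 p.2 i} := by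
      ext ω; simp [hE]
    rw [this]
    exact MeasurableSet.biInter (Set.to_countable _)
      (fun i _ => measurable_pi_apply i (measurableSet_singleton _))
  have sub : ∀ p, E p ⊆ T := by
    rintro ⟨m, r⟩ ω hω
    refine ⟨m + 1 + (r + 1), by omega, ?_⟩
    rw [hω _ le_rfl, pathMR_eq3 C m r _ (by omega)]
  have hmeasE : ∀ p : ℕ × ℕ,
      μ (E p) = ENNReal.ofReal
        ((qfac p.1 * (((p.1 : ℝ) + 2) / ((p.1 : ℝ) + 3)))
          * (qfac p.2 * (((p.2 : ℝ) + 2) / ((p.2 : ℝ) + 3)))) := by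
    rintro ⟨m, r⟩
    have h0 : pathMR C m r 0 = ((C, 2 * C) : ℝ × ℝ) := by
      rw [pathMR_eq1 C m r 0 (by omega)]
      norm_num
    have := hcyl (m + 1 + (r + 1)) (pathMR C m r)
    rw [h0, if_pos rfl, one_mul, prod_path C hC m r] at this
    exact this
  have hdisj : ∀ p q : ℕ × ℕ, p ≠ q → Disjoint (E p) (E q) := by
    rintro ⟨m, r⟩ ⟨m', r'⟩ hne
    rw [Set.disjoint_left]
    intro ω h1 h2
    rcases lt_trichotomy m m' with hm | hm | hm
    · exact path_disj_aux C hC m r m' r' (Or.inl hm) ω h1 h2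
    · subst hm
      rcases lt_trichotomy r r' with hr | hr | hr
      · exact path_disj_aux C hC m r m r' (Or.inr ⟨rfl, hr⟩) ω h1 h2
      · exact hne (by rw [hr])
      · exact path_disj_aux C hC m r' m r (Or.inr ⟨rfl, hr⟩) ω h2 h1
    · exact path_disj_aux C hC m' r' m r (Or.inl hm) ω h2 h1
  have key : ∀ M : ℕ, ENNReal.ofReal ((1 - qfac M) * (1 - qfac M)) ≤ μ T := by
    intro M
    have hpd : (↑(Finset.range M ×ˢ Finset.range M) : Set (ℕ × ℕ)).PairwiseDisjoint E :=
      fun p _ q _ hpq => hdisj p q hpq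
    have hunion : μ (⋃ p ∈ Finset.range M ×ˢ Finset.range M, E p)
        = ∑ p ∈ Finset.range M ×ˢ Finset.range M, μ (E p) :=
      measure_biUnion_finset hpd (fun p _ => meas p)
    have hsum : ∑ p ∈ Finset.range M ×ˢ Finset.range M, μ (E p)
        = ENNReal.ofReal ((1 - qfac M) * (1 - qfac M)) := by
      have gnn : ∀ k : ℕ, 0 ≤ qfac k * (((k : ℝ) + 2) / ((k : ℝ) + 3)) := by
        intro k
        have := qfac_nonneg k
        positivity
      calc ∑ p ∈ Finset.range M ×ˢ Finset.range M, μ (E p)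
          = ∑ p ∈ Finset.range M ×ˢ Finset.range M, ENNReal.ofReal
              ((qfac p.1 * (((p.1 : ℝ) + 2) / ((p.1 : ℝ) + 3)))
                * (qfac p.2 * (((p.2 : ℝ) + 2) / ((p.2 : ℝ) + 3)))) :=
            Finset.sum_congr rfl fun p _ => hmeasE p
        _ = ENNReal.ofReal (∑ p ∈ Finset.range M ×ˢ Finset.range M,
              (qfac p.1 * (((p.1 : ℝ) + 2) / ((p.1 : ℝ) + 3)))
                * (qfac p.2 * (((p.2 : ℝ) + 2) / ((p.2 : ℝ) + 3)))) := by
            rw [ENNReal.ofReal_sum_of_nonneg]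
            intro p _
            exact mul_nonneg (gnn p.1) (gnn p.2)
        _ = ENNReal.ofReal ((1 - qfac M) * (1 - qfac M)) := by
            rw [Finset.sum_product]
            simp_rw [← Finset.mul_sum, ← Finset.sum_mul, sum_g]
    calc ENNReal.ofReal ((1 - qfac M) * (1 - qfac M))
        = μ (⋃ p ∈ Finset.range M ×ˢ Finset.range M, E p) := by rw [hunion, hsum]
      _ ≤ μ T := measure_mono (Set.iUnion₂_subset fun p _ => sub p)
  have tendR : Filter.Tendsto (fun M : ℕ => (1 - qfac M) * (1 - qfac M))
      Filter.atTop (nhds 1) := by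
    have h1 : Filter.Tendsto (fun M : ℕ => 1 - qfac M) Filter.atTop (nhds 1) := by
      have := Filter.Tendsto.const_sub (1 : ℝ) qfac_tendsto
      simpa using this
    simpa using h1.mul h1
  have tend : Filter.Tendsto (fun M : ℕ => ENNReal.ofReal ((1 - qfac M) * (1 - qfac M)))
      Filter.atTop (nhds 1) := by
    have := ENNReal.tendsto_ofReal tendR
    simpa using this
  have hge : (1 : ENNReal) ≤ μ T := le_of_tendsto' tend key
  exact le_antisymm prob_le_one hge
end

section
/- Let g: E → ℝ be a function on a countable state space E of an irreducible Markov chain with transition probabilities p, and suppose there is a finite set E₀ ⊆ E with ∑_{z'} p(z,z') g(z') ≤ g(z) for all z ∉ E₀, and g(z) → ∞ as ‖z‖ → ∞. For the specific chain on E = ∪_i {(C(1+k₁),...,C,...,C(1+k_d)) : k ∈ ℕ^{d}} with transitions z → z^i with probability z_i/∑_j z_j, the choices g(z) = ∑_i z_i and E₀ = {z : ‖z‖₁ ≤ C d²} satisfy these hypotheses. -/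
/-- Verification of the Foster–Lyapunov criterion for the dominating chain on
`E = ⋃_i {(C(1+k₁),…,C,…,C(1+k_d))}` (with `d > 2`, `C > 0`): for `g(z) = ∑ z_i` and
`E₀ = {z ∈ E : ‖z‖₁ ≤ C d²}`, the set `E₀` is finite, the drift condition
`∑_i (z_i/g(z)) g(z^i) ≤ g(z)` holds for all `z ∈ E \ E₀`, and `g(z) → ∞` as
`‖z‖ → ∞` on `E`. -/
theorem stmt_16 (d : ℕ) (hd : 2 < d) (C : ℝ) (hC : 0 < C) :
    let E : Set (Fin d → ℝ) :=
      {z | ∃ i : Fin d, ∃ k : Fin d → ℕ,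
        z = fun j => if j = i then C else C * (1 + (k j : ℝ))}
    let g : (Fin d → ℝ) → ℝ := fun z => ∑ i, z i
    let E₀ : Set (Fin d → ℝ) := {z ∈ E | ∑ i, |z i| ≤ C * (d : ℝ) ^ 2}
    E₀.Finite ∧
      (∀ z ∈ E, z ∉ E₀ →
        ∑ i, (z i / g z) * g (fun j => if j = i then C else z j + C) ≤ g z) ∧
      (∀ M : ℝ, ∃ R : ℝ, ∀ z ∈ E, R ≤ ∑ i, |z i| → M ≤ g z) := by
  intro E g E₀
  have hdR : (0:ℝ) < d := by positivity
  have hzC : ∀ z ∈ E, ∀ j, C ≤ z j := by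
    rintro z ⟨i, k, rfl⟩ j
    by_cases h : j = i <;> simp only [h, if_true, if_false]
    · exact le_refl C
    · nlinarith [(Nat.cast_nonneg (k j) : (0:ℝ) ≤ k j)]
  have habs : ∀ z ∈ E, (∑ i, |z i|) = ∑ i, z i := by
    intro z hz
    exact Finset.sum_congr rfl fun j _ => abs_of_nonneg (hC.le.trans (hzC z hz j))
  refine ⟨?_, ?_, ?_⟩
  · -- finiteness of E₀
    apply Set.Finite.subset (Set.finite_range
      (fun p : Fin d × (Fin d → Fin (d*d+1)) =>
        fun j => if j = p.1 then C else C * (1 + (p.2 j : ℝ))))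
    rintro z ⟨hzE, hsum⟩
    obtain ⟨i, k, hz⟩ := hzE
    have hzE' : z ∈ E := ⟨i, k, hz⟩
    have hk : ∀ j, j ≠ i → k j ≤ d*d := by
      intro j hj
      have h1 : |z j| ≤ ∑ m, |z m| :=
        Finset.single_le_sum (fun m _ => abs_nonneg (z m)) (Finset.mem_univ j)
      have hzj : z j = C * (1 + (k j : ℝ)) := by rw [hz]; simp [hj]
      have h2 : C * (1 + (k j : ℝ)) ≤ C * (d:ℝ) ^ 2 := by
        have habsj : |z j| = z j := abs_of_nonneg (hC.le.trans (hzC z hzE' j))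
        rw [habsj, hzj] at h1
        exact h1.trans hsum
      have h3 : (1 + (k j : ℝ)) ≤ (d:ℝ) ^ 2 := le_of_mul_le_mul_left h2 hC
      have h4 : (k j : ℝ) < ((d*d+1 : ℕ) : ℝ) := by push_cast; nlinarith
      have h5 : k j < d*d+1 := by exact_mod_cast h4
      omega
    refine ⟨(i, fun j => ⟨min (k j) (d*d), by omega⟩), ?_⟩
    rw [hz]
    funext j
    by_cases h : j = i
    · simp [h]
    · simp only [h, if_false]
      congr 2
      have := hk j h
      simp [Nat.min_eq_left this]
  · -- drift condition
    intro z hz hz0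
    have hSgt : C * (d:ℝ) ^ 2 < ∑ i, z i := by
      rw [← habs z hz]
      by_contra hle
      exact hz0 ⟨hz, not_lt.mp hle⟩
    have hSpos : 0 < ∑ i, z i := lt_trans (by positivity) hSgt
    have key : ∀ i : Fin d, (∑ j, (if j = i then C else z j + C))
        = (∑ j, z j) + d * C - z i := by
      intro i
      have step : ∀ j : Fin d, (if j = i then C else z j + C)
          = (z j + C) - (if j = i then z j else 0) := by
        intro j; by_cases h : j = i <;> simp [h]
      rw [Finset.sum_congr rfl fun j _ => step j, Finset.sum_sub_distrib,
        Finset.sum_add_distrib, Finset.sum_ite_eq' Finset.univ i (fun j => z j)]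
      simp [Finset.card_univ, mul_comm]
    show ∑ i, (z i / ∑ j, z j) * (∑ j, if j = i then C else z j + C) ≤ ∑ i, z i
    have lhs_eq : ∑ i, (z i / ∑ j, z j) * (∑ j, if j = i then C else z j + C)
        = (∑ i, z i * ((∑ j, z j) + d * C - z i)) / (∑ j, z j) := by
      rw [Finset.sum_div]
      refine Finset.sum_congr rfl fun i _ => ?_
      rw [key i]; ring
    rw [lhs_eq, div_le_iff₀ hSpos]
    have cauchy : (∑ i, z i) ^ 2 ≤ (d:ℝ) * ∑ i, (z i) ^ 2 := by
      have := sq_sum_le_card_mul_sum_sq (s := (Finset.univ : Finset (Fin d))) (f := z)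
      simpa using this
    have expand : ∑ i, z i * ((∑ j, z j) + d * C - z i)
        = (∑ i, z i) * ((∑ j, z j) + d * C) - ∑ i, (z i) ^ 2 := by
      rw [Finset.sum_congr rfl (fun i _ =>
        (by ring : z i * ((∑ j, z j) + d * C - z i) = z i * ((∑ j, z j) + d * C) - z i ^ 2)),
        Finset.sum_sub_distrib, ← Finset.sum_mul]
    rw [expand]
    nlinarith [hSgt, hSpos, cauchy, hdR]
  · intro M
    refine ⟨M, fun z hz hR => ?_⟩
    show M ≤ ∑ i, z i
    rwa [← habs z hz]
end

section
/- With η̃(t) = ∑_j ∑_{T_k^j < S(t)} α̃_{j} e^{-β̃(t-T_k^j)} and η̃_aux(t) = ∑_j ∑_{S(t) ≤ T_k^j < t} α̃_j e^{-β̃(t-T_k^j)}, if the distinguished component jumps at T_{l+1} (so S(T_{l+1}) = T_{l+1}) and the event at T_l belongs to component d_l, then η̃(T_{l+1}) = e^{-β̃(T_{l+1}-T_l)} ( η̃(T_l) + η̃_aux(T_l) + α̃_{d_l} ). -/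
/-- Jump-update formula for the distant-memory term: if the distinguished component
jumps at `T_{l+1}` (so `S(T_{l+1}) = T_{l+1}`), the event at `T_l` belongs to component
`d_l`, no other component jumps at `T_l`, and no event lies in `(T_l, T_{l+1})`, then
`η̃(T_{l+1}) = e^{-β̃(T_{l+1}-T_l)} (η̃(T_l) + η̃_aux(T_l) + α̃_{d_l})`. -/
theorem stmt_19 (d : ℕ) (times : Fin d → Finset ℝ) (αt : Fin d → ℝ) (βt : ℝ)
    (hβ : 0 < βt) (S : ℝ → ℝ) (Tl Tl1 : ℝ) (dl : Fin d) (hT : Tl < Tl1)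
    (hS1 : S Tl1 = Tl1) (hSl : S Tl ≤ Tl)
    (hmem : Tl ∈ times dl) (hsimul : ∀ j, j ≠ dl → Tl ∉ times j)
    (hgap : ∀ j, ∀ u ∈ times j, ¬(Tl < u ∧ u < Tl1)) :
    (∑ j, ∑ u ∈ (times j).filter (fun u => u < S Tl1), αt j * Real.exp (-βt * (Tl1 - u)))
      = Real.exp (-βt * (Tl1 - Tl)) *
          ((∑ j, ∑ u ∈ (times j).filter (fun u => u < S Tl),
              αt j * Real.exp (-βt * (Tl - u)))
            + (∑ j, ∑ u ∈ (times j).filter (fun u => S Tl ≤ u ∧ u < Tl),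
                αt j * Real.exp (-βt * (Tl - u)))
            + αt dl) := by
  have key : ∀ u : ℝ, Real.exp (-βt * (Tl1 - u))
      = Real.exp (-βt * (Tl1 - Tl)) * Real.exp (-βt * (Tl - u)) := by
    intro u; rw [← Real.exp_add]; ring_nf
  rw [hS1]
  have hsplit : ∀ j, ∑ u ∈ (times j).filter (fun u => u < Tl1),
        αt j * Real.exp (-βt * (Tl1 - u))
      = Real.exp (-βt * (Tl1 - Tl)) *
          ((∑ u ∈ (times j).filter (fun u => u < S Tl), αt j * Real.exp (-βt * (Tl - u)))
            + (∑ u ∈ (times j).filter (fun u => S Tl ≤ u ∧ u < Tl),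
                αt j * Real.exp (-βt * (Tl - u)))
            + (if j = dl then αt j else 0)) := by
    intro j
    have hfac : ∀ s : Finset ℝ, ∑ u ∈ s, αt j * Real.exp (-βt * (Tl1 - u))
        = Real.exp (-βt * (Tl1 - Tl)) * ∑ u ∈ s, αt j * Real.exp (-βt * (Tl - u)) := by
      intro s
      rw [Finset.mul_sum]
      exact Finset.sum_congr rfl (fun u _ => by rw [key u]; ring)
    have hA : (times j).filter (fun u => u < Tl1)
        = (times j).filter (fun u => u ≤ Tl) := by
      ext u
      simp only [Finset.mem_filter]
      constructor
      · rintro ⟨hu, h⟩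
        refine ⟨hu, ?_⟩
        by_contra hc
        push_neg at hc
        exact hgap j u hu ⟨hc, h⟩
      · rintro ⟨hu, h⟩
        exact ⟨hu, lt_of_le_of_lt h hT⟩
    have hlt : ∑ u ∈ (times j).filter (fun u => u < Tl),
          αt j * Real.exp (-βt * (Tl - u))
        = (∑ u ∈ (times j).filter (fun u => u < S Tl), αt j * Real.exp (-βt * (Tl - u)))
          + (∑ u ∈ (times j).filter (fun u => S Tl ≤ u ∧ u < Tl),
              αt j * Real.exp (-βt * (Tl - u))) := by
      rw [← Finset.sum_filter_add_sum_filter_not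
        ((times j).filter (fun u => u < Tl)) (fun u => u < S Tl)]
      congr 1
      · congr 1
        rw [Finset.filter_filter]
        apply Finset.filter_congr
        intro u _
        constructor
        · rintro ⟨_, h⟩; exact h
        · intro h; exact ⟨lt_of_lt_of_le h hSl, h⟩
      · congr 1
        rw [Finset.filter_filter]
        apply Finset.filter_congr
        intro u _
        constructor
        · rintro ⟨h1, h2⟩; exact ⟨not_lt.mp h2, h1⟩
        · rintro ⟨h1, h2⟩; exact ⟨h2, not_lt.mpr h1⟩
    by_cases hj : j = dl
    · subst hj
      have hins : (times j).filter (fun u => u ≤ Tl)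
          = insert Tl ((times j).filter (fun u => u < Tl)) := by
        ext u
        simp only [Finset.mem_filter, Finset.mem_insert]
        constructor
        · rintro ⟨hu, h⟩
          rcases lt_or_eq_of_le h with h | h
          · exact Or.inr ⟨hu, h⟩
          · exact Or.inl h
        · rintro (rfl | ⟨hu, h⟩)
          · exact ⟨hmem, le_refl _⟩
          · exact ⟨hu, le_of_lt h⟩
      have hnot : Tl ∉ (times j).filter (fun u => u < Tl) := by
        simp [Finset.mem_filter]
      rw [hA, hins, Finset.sum_insert hnot, hfac, hlt, if_pos rfl, key Tl]
      simp only [sub_self, mul_zero, Real.exp_zero, mul_one]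
      ring
    · have hne : (times j).filter (fun u => u ≤ Tl)
          = (times j).filter (fun u => u < Tl) := by
        apply Finset.filter_congr
        intro u hu
        constructor
        · intro h
          rcases lt_or_eq_of_le h with h | h
          · exact h
          · exact absurd (h ▸ hu) (hsimul j hj)
        · exact le_of_lt
      rw [hA, hne, hfac, hlt, if_neg hj]
      ring
  rw [Finset.sum_congr rfl (fun j _ => hsplit j), ← Finset.mul_sum]
  congr 1
  rw [Finset.sum_add_distrib, Finset.sum_add_distrib]
  simp [Finset.sum_ite_eq', Finset.mem_univ]
end
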